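/- Let S be a set of n points in convex position (no three collinear) and let E be an injective mapping of the vertices v_1,...,v_n of a path onto S. The straight-line drawing of the path under E is planar (no two non-adjacent edges cross) if and only if for every i with 1 < i < n, the image set {E(v_1),...,E(v_i)} is a consecutive subset of S along the convex hull of S. -/

import Mathlib

/-- Edge direction labels. -/
inductive Dir | U | D | L | R
deriving DecidableEq

/-- Opposite label: U↔D, L↔R. -/
def Dir.opp : Dir → Dir
  | .U => .D | .D => .U | .L => .R | .R => .L

/-- Label after counterclockwise rotation by π/2: U↦L, D↦R, R↦U, L↦D. -/
def Dir.rot : Dir → Dir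
  | .U => .L | .D => .R | .R => .U | .L => .D

/-- Label after vertical-line reflection: U↦U, D↦D, R↦L, L↦R. -/
def Dir.mir : Dir → Dir
  | .U => .U | .D => .D | .R => .L | .L => .R

/-- An edge from `a` to `b` is consistent with a direction label. -/
def dirOk : Dir → ℝ × ℝ → ℝ × ℝ → Prop
  | .U, a, b => a.2 < b.2
  | .D, a, b => b.2 < a.2
  | .R, a, b => a.1 < b.1
  | .L, a, b => b.1 < a.1

/-- The drawing of a path with edge labels `d` and vertex placement `E` is
direction-consistent. -/
def DirConsistent {m : ℕ} (d : Fin m → Dir) (E : Fin (m + 1) → ℝ × ℝ) : Prop :=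
  ∀ i : Fin m, dirOk (d i) (E i.castSucc) (E i.succ)

/-- The straight-line drawing of the path with vertex placement `E` is planar:
non-adjacent segments are disjoint; adjacent segments meet only at the shared endpoint. -/
def PlanarDrawing {m : ℕ} (E : Fin (m + 1) → ℝ × ℝ) : Prop :=
  (∀ i j : Fin m, (i : ℕ) + 1 < (j : ℕ) →
    segment ℝ (E i.castSucc) (E i.succ) ∩ segment ℝ (E j.castSucc) (E j.succ) = ∅) ∧
  (∀ i j : Fin m, (i : ℕ) + 1 = (j : ℕ) →
    segment ℝ (E i.castSucc) (E i.succ) ∩ segment ℝ (E j.castSucc) (E j.succ) = {E i.succ})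

/-- `E` is an embedding of the path vertices onto the point set `S`. -/
def EmbOn {m : ℕ} (E : Fin (m + 1) → ℝ × ℝ) (S : Set (ℝ × ℝ)) : Prop :=
  Function.Injective E ∧ Set.range E = S

/-- Planar direction-consistent embedding of the labeled path `d` on `S`. -/
def PDCE {m : ℕ} (d : Fin m → Dir) (E : Fin (m + 1) → ℝ × ℝ) (S : Set (ℝ × ℝ)) : Prop :=
  EmbOn E S ∧ DirConsistent d E ∧ PlanarDrawing E

/-- `S` is in convex position. -/
def ConvexPos (S : Set (ℝ × ℝ)) : Prop :=
  ConvexIndependent ℝ ((↑) : S → ℝ × ℝ)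

/-- No three distinct points of `S` are collinear. -/
def NoThreeCollinear (S : Set (ℝ × ℝ)) : Prop :=
  ∀ p ∈ S, ∀ q ∈ S, ∀ r ∈ S, p ≠ q → p ≠ r → q ≠ r →
    ¬ Collinear ℝ ({p, q, r} : Set (ℝ × ℝ))

/-- General position: no three collinear, no two points with equal x- or y-coordinate. -/
def GenPos (S : Set (ℝ × ℝ)) : Prop :=
  NoThreeCollinear S ∧ ∀ p ∈ S, ∀ q ∈ S, p ≠ q → p.1 ≠ q.1 ∧ p.2 ≠ q.2

def IsTopmost (S : Set (ℝ × ℝ)) (t : ℝ × ℝ) : Prop :=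
  t ∈ S ∧ ∀ p ∈ S, p ≠ t → p.2 < t.2
def IsBottommost (S : Set (ℝ × ℝ)) (b : ℝ × ℝ) : Prop :=
  b ∈ S ∧ ∀ p ∈ S, p ≠ b → b.2 < p.2
def IsLeftmost (S : Set (ℝ × ℝ)) (l : ℝ × ℝ) : Prop :=
  l ∈ S ∧ ∀ p ∈ S, p ≠ l → l.1 < p.1
def IsRightmost (S : Set (ℝ × ℝ)) (r : ℝ × ℝ) : Prop :=
  r ∈ S ∧ ∀ p ∈ S, p ≠ r → p.1 < r.1

/-- Cross product telling on which side of the directed line `a → b` the point `p` lies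
(`0 < cross a b p` means `p` is strictly to the left). -/
def cross (a b p : ℝ × ℝ) : ℝ :=
  (b.1 - a.1) * (p.2 - a.2) - (b.2 - a.2) * (p.1 - a.1)

/-- With `b` bottommost and `t` topmost, all other points lie strictly to the left of the
line through `b` and `t`. -/
def LeftSided (S : Set (ℝ × ℝ)) (b t : ℝ × ℝ) : Prop :=
  IsBottommost S b ∧ IsTopmost S t ∧ ∀ p ∈ S, p ≠ b → p ≠ t → 0 < cross b t p

/-- With `b` bottommost and `t` topmost, all other points lie strictly to the right of the
line through `b` and `t`. -/
def RightSided (S : Set (ℝ × ℝ)) (b t : ℝ × ℝ) : Prop :=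
  IsBottommost S b ∧ IsTopmost S t ∧ ∀ p ∈ S, p ≠ b → p ≠ t → cross b t p < 0

/-- Two points of `S` are consecutive on the convex hull of `S`: all other points of `S`
lie strictly on one side of the line through them. -/
def HullConsecutive (S : Set (ℝ × ℝ)) (p q : ℝ × ℝ) : Prop :=
  p ∈ S ∧ q ∈ S ∧ p ≠ q ∧
    ((∀ r ∈ S, r ≠ p → r ≠ q → 0 < cross p q r) ∨
     (∀ r ∈ S, r ≠ p → r ≠ q → cross p q r < 0))

/-- Strip-convex point set with bottommost `b`, leftmost `l`, topmost `t`, rightmost `r`: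
`b` and `l` coincide or are hull-consecutive, and so do `t` and `r`. -/
def StripConvex (S : Set (ℝ × ℝ)) (b l t r : ℝ × ℝ) : Prop :=
  IsBottommost S b ∧ IsLeftmost S l ∧ IsTopmost S t ∧ IsRightmost S r ∧
    (b = l ∨ HullConsecutive S b l) ∧ (t = r ∨ HullConsecutive S t r)

/-- `T` is a consecutive subset of the convex point set `S` along its hull:
it can be separated from `S \ T` by a line. -/
def Consecutive (S T : Set (ℝ × ℝ)) : Prop :=
  T ⊆ S ∧ ∃ f : (ℝ × ℝ) →ₗ[ℝ] ℝ, ∃ c : ℝ,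
    (∀ p ∈ T, c < f p) ∧ ∀ p ∈ S \ T, f p < c


open Set

/-! If every proper prefix is cut off from the remaining points by a line, two
non-adjacent edges are separated by the line of the prefix ending just before the later edge,
and adjacent edges meet only in their common vertex since no three points are collinear.

Conversely, suppose the convex hulls of a prefix and of the remaining points meet. In convex
position this forces a segment between two prefix points to cross a segment `[c, d]` between
two remaining points. The endpoints of the first segment lie on opposite sides of the line
`cd`, so walking along the prefix some edge changes side, and in convex position an edge that
changes side of the line `cd` crosses `[c, d]`. Running the same argument along the suffix
against this prefix edge yields a suffix edge crossing a prefix edge, which planarity forbids.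
Hence the two hulls are disjoint, and Hahn–Banach separates them by a line. -/

lemma cross_self_left (a b : ℝ × ℝ) : cross a b a = 0 := by
  unfold cross; ring

lemma cross_self_right (a b : ℝ × ℝ) : cross a b b = 0 := by
  unfold cross; ring

lemma cross_smul_add_smul {s t : ℝ} (hst : s + t = 1) (a b u v : ℝ × ℝ) :
    cross a b (s • u + t • v) = s * cross a b u + t * cross a b v := by
  obtain rfl := eq_sub_of_add_eq hst
  simp only [cross, Prod.fst_add, Prod.snd_add, Prod.smul_fst, Prod.smul_snd, smul_eq_mul]
  ring

lemma cross_eq_zero_of_mem_segment {a b z : ℝ × ℝ} (h : z ∈ segment ℝ a b) :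
    cross a b z = 0 := by
  obtain ⟨s, t, -, -, hst, rfl⟩ := h
  rw [cross_smul_add_smul hst, cross_self_left, cross_self_right]
  ring

lemma collinear_of_cross_eq_zero {p q r : ℝ × ℝ} (h : cross p q r = 0) :
    Collinear ℝ ({p, q, r} : Set (ℝ × ℝ)) := by
  rcases eq_or_ne p q with rfl | hpq
  · simpa using collinear_pair ℝ p r
  unfold cross at h
  obtain ⟨u, hu⟩ : ∃ u : ℝ, r = u • (q - p) + p := by
    rcases ne_or_eq q.1 p.1 with h1 | h1
    · have h1' : q.1 - p.1 ≠ 0 := sub_ne_zero.2 h1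
      refine ⟨(r.1 - p.1) / (q.1 - p.1), Prod.ext ?_ ?_⟩ <;>
        simp only [Prod.fst_add, Prod.snd_add, Prod.smul_fst, Prod.smul_snd, Prod.fst_sub,
          Prod.snd_sub, smul_eq_mul] <;> field_simp <;> linarith
    · have h2 : q.2 - p.2 ≠ 0 := sub_ne_zero.2 fun h2 => hpq (Prod.ext h1.symm h2.symm)
      rw [h1, sub_self, zero_mul, zero_sub, neg_eq_zero] at h
      have hr1 : r.1 = p.1 := by linarith [(mul_eq_zero.1 h).resolve_left h2]
      refine ⟨(r.2 - p.2) / (q.2 - p.2), Prod.ext ?_ ?_⟩ <;>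
        simp only [Prod.fst_add, Prod.snd_add, Prod.smul_fst, Prod.smul_snd, Prod.fst_sub,
          Prod.snd_sub, smul_eq_mul, h1, hr1] <;> field_simp <;> ring
  rw [collinear_iff_of_mem (mem_insert p _)]
  refine ⟨q - p, ?_⟩
  simp only [mem_insert_iff, mem_singleton_iff, forall_eq_or_imp, forall_eq, vadd_eq_add]
  exact ⟨⟨0, by simp⟩, ⟨1, by simp⟩, ⟨u, hu⟩⟩

lemma NoThreeCollinear.cross_ne_zero {S : Set (ℝ × ℝ)} (hS : NoThreeCollinear S)
    {p q r : ℝ × ℝ} (hp : p ∈ S) (hq : q ∈ S) (hr : r ∈ S) (hpq : p ≠ q) (hpr : p ≠ r)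
    (hqr : q ≠ r) : cross p q r ≠ 0 := fun h =>
  hS p hp q hq r hr hpq hpr hqr (collinear_of_cross_eq_zero h)

lemma cross_mul_neg_of_segment_inter {a b c d : ℝ × ℝ} (hc : cross a b c ≠ 0)
    (hd : cross a b d ≠ 0) (h : (segment ℝ a b ∩ segment ℝ c d).Nonempty) :
    cross a b c * cross a b d < 0 := by
  obtain ⟨z, hz, s, t, hs, ht, hst, rfl⟩ := h
  have h0 := cross_eq_zero_of_mem_segment hz
  rw [cross_smul_add_smul hst] at h0
  by_contra! hpos
  have hcd : 0 < cross a b c * cross a b d := hpos.lt_of_ne' (mul_ne_zero hc hd)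
  have key : cross a b c * cross a b d + s * cross a b c ^ 2 + t * cross a b d ^ 2 = 0 := by
    linear_combination (cross a b c + cross a b d) * h0 - cross a b c * cross a b d * hst
  nlinarith [mul_nonneg hs (sq_nonneg (cross a b c)), mul_nonneg ht (sq_nonneg (cross a b d))]

lemma exists_mem_segment_cross_eq_zero {p q r s : ℝ × ℝ}
    (h : cross p q r * cross p q s < 0) : ∃ m ∈ segment ℝ r s, cross p q m = 0 := by
  wlog hr : 0 < cross p q r generalizing r s
  · obtain ⟨m, hm, hm0⟩ := this (by rwa [mul_comm]) (by nlinarith)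
    exact ⟨m, segment_symm ℝ r s ▸ hm, hm0⟩
  set X := cross p q r
  set Y := cross p q s
  have hY : Y < 0 := by nlinarith
  have hXY : X - Y ≠ 0 := by linarith
  refine ⟨(-Y / (X - Y)) • r + (X / (X - Y)) • s, ⟨_, _, by apply div_nonneg <;> linarith,
    by apply div_nonneg <;> linarith, by field_simp; ring, rfl⟩, ?_⟩
  rw [cross_smul_add_smul (by field_simp; ring)]
  field_simp
  ring

lemma segment_inter_segment_eq_singleton {a b d : ℝ × ℝ} (h : cross b d a ≠ 0) :
    segment ℝ a b ∩ segment ℝ b d = {b} := by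
  ext z
  constructor
  · rintro ⟨⟨s, t, -, -, hst, rfl⟩, hz⟩
    have h0 := cross_eq_zero_of_mem_segment hz
    rw [cross_smul_add_smul hst, cross_self_left, mul_zero, add_zero] at h0
    obtain rfl : s = 0 := (mul_eq_zero.1 h0).resolve_right h
    obtain rfl : t = 1 := by linarith
    simp
  · intro hz
    rw [mem_singleton_iff.1 hz]
    exact ⟨right_mem_segment ℝ a b, left_mem_segment ℝ b d⟩

lemma exists_mul_succ_nonpos_of_mul_neg {R : Type*} [CommRing R] [LinearOrder R]
    [IsStrictOrderedRing R] (g : ℕ → R) {a b : ℕ} (h : g a * g b < 0) :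
    ∃ k, min a b ≤ k ∧ k < max a b ∧ g k * g (k + 1) ≤ 0 := by
  wlog hab : a ≤ b generalizing a b
  · obtain ⟨k, hk⟩ := this (by rwa [mul_comm]) (by omega)
    exact ⟨k, by rwa [min_comm, max_comm]⟩
  rw [min_eq_left hab, max_eq_right hab]
  induction b, hab using Nat.le_induction with
  | base => nlinarith [mul_self_nonneg (g a)]
  | succ b hab ih =>
    by_cases hb : g a * g b < 0
    · obtain ⟨k, hk1, hk2, hk⟩ := ih hb
      exact ⟨k, hk1, by omega, hk⟩
    · refine ⟨b, hab, by omega, ?_⟩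
      by_contra! hpos
      have ha : 0 < g a * g a := mul_self_pos.2 fun h0 => by simp [h0] at h
      nlinarith [mul_pos ha hpos]

lemma AffineBasis.mem_convexHull_image_compl_of_coord_eq_zero {ι E : Type*} [Fintype ι]
    [AddCommGroup E] [Module ℝ E] (b : AffineBasis ι ℝ E) {z : E} {k : ι}
    (hz : ∀ i, 0 ≤ b.coord i z) (hk : b.coord k z = 0) :
    z ∈ convexHull ℝ (b '' {k}ᶜ) := by
  classical
  have hsum : ∑ i ∈ Finset.univ.erase k, b.coord i z = 1 := by
    rw [Finset.sum_erase (f := fun i => b.coord i z) _ hk, b.sum_coord_apply_eq_one]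
  have hz' : (Finset.univ.erase k).centerMass (fun i => b.coord i z) b = z := by
    rw [Finset.centerMass, hsum, inv_one, one_smul, Finset.sum_erase _ (by rw [hk, zero_smul]),
      b.linear_combination_coord_eq_self]
  rw [← hz']
  exact Finset.centerMass_mem_convexHull _ (fun i _ => hz i) (by rw [hsum]; exact one_pos)
    fun i hi => ⟨i, Finset.ne_of_mem_erase hi, rfl⟩

/-- Carathéodory reduces `T` to a simplex; being connected, `C` then meets the boundary of the
simplex, which is the union of its facets. -/
lemma exists_finset_card_le_finrank_inter_convexHull {E : Type*} [NormedAddCommGroup E]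
    [NormedSpace ℝ E] [FiniteDimensional ℝ E] {T C : Set E} (hC : Convex ℝ C)
    (hCT : (C ∩ convexHull ℝ T).Nonempty) (hCT' : ¬ C ⊆ convexHull ℝ T) :
    ∃ u : Finset E, ↑u ⊆ T ∧ u.card ≤ Module.finrank ℝ E ∧ (C ∩ convexHull ℝ ↑u).Nonempty := by
  classical
  obtain ⟨x, hxC, hxT⟩ := hCT
  rw [convexHull_eq_union] at hxT
  simp only [mem_iUnion] at hxT
  obtain ⟨u, huT, hu, hxu⟩ := hxT
  have hcard : u.card ≤ Module.finrank ℝ E + 1 := by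
    simpa using hu.card_le_finrank_succ.trans (Nat.add_le_add_right (Submodule.finrank_le _) 1)
  rcases hcard.lt_or_eq with hlt | heq
  · exact ⟨u, huT, by omega, x, hxC, hxu⟩
  let b : AffineBasis u ℝ E :=
    ⟨(↑), hu, hu.affineSpan_eq_top_iff_card_eq_finrank_add_one.2 (by simpa using heq)⟩
  have hrange : range b = ↑u := Subtype.range_coe
  obtain ⟨c, hcC, hcT⟩ := not_subset.1 hCT'
  obtain ⟨z, hzC, hzu, hzint⟩ : (C ∩ (convexHull ℝ ↑u ∩ (interior (convexHull ℝ ↑u))ᶜ)).Nonempty :=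
    isPreconnected_closed_iff.1 hC.isPreconnected _ _ (u.finite_toSet.isClosed_convexHull ℝ)
      isOpen_interior.isClosed_compl
      (fun y _ => (em _).imp_right fun hy h => hy (interior_subset h)) ⟨x, hxC, hxu⟩
      ⟨c, hcC, fun h => hcT (convexHull_mono huT (interior_subset h))⟩
  rw [← hrange, b.convexHull_eq_nonneg_coord] at hzu
  rw [← hrange, b.interior_convexHull, mem_compl_iff, mem_ofPred_eq] at hzint
  push Not at hzint
  obtain ⟨k, hk⟩ := hzint
  refine ⟨u.erase k, (Finset.coe_subset.2 (Finset.erase_subset _ _)).trans huT,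
    by rw [Finset.card_erase_of_mem k.2]; omega, z, hzC, convexHull_mono ?_
      (b.mem_convexHull_image_compl_of_coord_eq_zero hzu (le_antisymm hk (hzu k)))⟩
  rintro _ ⟨i, hik, rfl⟩
  exact Finset.mem_erase.2 ⟨fun h => hik (Subtype.ext h), i.2⟩

section

variable {S : Set (ℝ × ℝ)} {m : ℕ}

lemma ConvexPos.notMem_convexHull (hS : ConvexPos S) {p : ℝ × ℝ} (hp : p ∈ S)
    {T : Set (ℝ × ℝ)} (hTS : T ⊆ S) (hpT : p ∉ T) : p ∉ convexHull ℝ T := fun h =>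
  convexIndependent_set_iff_notMem_convexHull_sdiff.1 hS p hp <|
    convexHull_mono (fun x hx => show x ∈ S \ {p} from ⟨hTS hx, fun hxp => hpT (hxp ▸ hx)⟩) h

/-- The line `pq` meets `[r, s]` in a point `m`; if `m` fell outside `[p, q]`, then `p` or `q`
would lie in the convex hull of the other three points. -/
lemma ConvexPos.segment_inter_nonempty_of_cross_mul_neg (hS : ConvexPos S)
    {p q r s : ℝ × ℝ} (hp : p ∈ S) (hq : q ∈ S) (hr : r ∈ S) (hs : s ∈ S) (hpq : p ≠ q)
    (h : cross p q r * cross p q s < 0) : (segment ℝ p q ∩ segment ℝ r s).Nonempty := by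
  have hrpq : r ≠ p ∧ r ≠ q := ⟨by rintro rfl; simp [cross_self_left] at h,
    by rintro rfl; simp [cross_self_right] at h⟩
  have hspq : s ≠ p ∧ s ≠ q := ⟨by rintro rfl; simp [cross_self_left] at h,
    by rintro rfl; simp [cross_self_right] at h⟩
  obtain ⟨m, hm, hm0⟩ := exists_mem_segment_cross_eq_zero h
  have hull_of_mem_segment : ∀ x y, x ∈ segment ℝ m y → x ∈ convexHull ℝ {y, r, s} :=
    fun x y hx => (convex_convexHull ℝ _).segment_subset
      (convexHull_mono (subset_insert _ _) (by rwa [convexHull_pair]))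
      (subset_convexHull ℝ _ (mem_insert y _)) hx
  rcases (collinear_of_cross_eq_zero hm0).wbtw_or_wbtw_or_wbtw with hq' | hm' | hp'
  · refine absurd (hull_of_mem_segment q p (mem_segment_iff_wbtw.2 hq'.symm))
      (hS.notMem_convexHull hq (insert_subset hp (pair_subset hr hs)) ?_)
    simp [hpq.symm, hrpq.2.symm, hspq.2.symm]
  · exact ⟨m, mem_segment_iff_wbtw.2 hm'.symm, hm⟩
  · refine absurd (hull_of_mem_segment p q (mem_segment_iff_wbtw.2 hp'))
      (hS.notMem_convexHull hp (insert_subset hq (pair_subset hr hs)) ?_)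
    simp [hpq, hrpq.1.symm, hspq.1.symm]


lemma exists_edge_inter_segment (hconv : ConvexPos S) (hcol : NoThreeCollinear S)
    {E : Fin (m + 1) → ℝ × ℝ} (hES : ∀ j, E j ∈ S) {a b : Fin (m + 1)} {c d : ℝ × ℝ}
    (hc : c ∈ S) (hd : d ∈ S) (hcd : c ≠ d)
    (hpath : ∀ j : Fin (m + 1), min (a : ℕ) b ≤ j → (j : ℕ) ≤ max (a : ℕ) b →
      E j ≠ c ∧ E j ≠ d)
    (h : (segment ℝ (E a) (E b) ∩ segment ℝ c d).Nonempty) :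
    ∃ k : Fin m, min (a : ℕ) b ≤ k ∧ (k : ℕ) < max (a : ℕ) b ∧
      (segment ℝ (E k.castSucc) (E k.succ) ∩ segment ℝ c d).Nonempty := by
  let g : ℕ → ℝ := fun n => cross c d (E (Fin.clamp n m))
  have hclamp : ∀ j : Fin (m + 1), Fin.clamp j m = j := fun j =>
    Fin.ext (by simp [Fin.clamp]; omega)
  have hg : ∀ j : Fin (m + 1), g j = cross c d (E j) := fun j => by simp only [g, hclamp]
  have hne : ∀ j : Fin (m + 1), min (a : ℕ) b ≤ j → (j : ℕ) ≤ max (a : ℕ) b →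
      cross c d (E j) ≠ 0 := fun j h1 h2 =>
    hcol.cross_ne_zero hc hd (hES j) hcd (hpath j h1 h2).1.symm (hpath j h1 h2).2.symm
  have hab : g a * g b < 0 := by
    rw [hg, hg]
    exact cross_mul_neg_of_segment_inter (hne a (by omega) (by omega))
      (hne b (by omega) (by omega)) (by rwa [inter_comm])
  obtain ⟨k, hk1, hk2, hk⟩ := exists_mul_succ_nonpos_of_mul_neg g hab
  have hkm : k < m := by omega
  have hcast : Fin.clamp k m = (⟨k, hkm⟩ : Fin m).castSucc := Fin.ext (by simp [Fin.clamp]; omega)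
  have hsucc : Fin.clamp (k + 1) m = (⟨k, hkm⟩ : Fin m).succ := Fin.ext (by simp [Fin.clamp]; omega)
  have hsign : g k * g (k + 1) < 0 := by
    refine lt_of_le_of_ne hk (mul_ne_zero ?_ ?_)
    · simpa only [g, hcast] using hne _ (by simpa using hk1) (by simp; omega)
    · simpa only [g, hsucc] using hne _ (by simp; omega) (by simp; omega)
  refine ⟨⟨k, hkm⟩, hk1, hk2, ?_⟩
  rw [inter_comm]
  refine hconv.segment_inter_nonempty_of_cross_mul_neg hc hd (hES _) (hES _) hcd ?_
  simpa only [g, hcast, hsucc] using hsign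

lemma ConvexPos.exists_segment_inter_of_convexHull_inter (hS : ConvexPos S)
    {A C : Set (ℝ × ℝ)} (hAS : A ⊆ S) (hC : Convex ℝ C) (hCA : (C ∩ convexHull ℝ A).Nonempty)
    {c : ℝ × ℝ} (hcC : c ∈ C) (hcS : c ∈ S) (hcA : c ∉ A) :
    ∃ a ∈ A, ∃ b ∈ A, (C ∩ segment ℝ a b).Nonempty := by
  obtain ⟨u, huA, hcard, hu⟩ := exists_finset_card_le_finrank_inter_convexHull hC hCA
    fun h => hS.notMem_convexHull hcS hAS hcA (h hcC)
  simp only [Module.finrank_prod, Module.finrank_self] at hcard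
  obtain h | h | h : u.card = 0 ∨ u.card = 1 ∨ u.card = 2 := by omega
  · simp [Finset.card_eq_zero.1 h] at hu
  · obtain ⟨a, rfl⟩ := Finset.card_eq_one.1 h
    exact ⟨a, huA (by simp), a, huA (by simp), by simpa using hu⟩
  · obtain ⟨a, b, -, rfl⟩ := Finset.card_eq_two.1 h
    exact ⟨a, huA (by simp), b, huA (by simp), by simpa [convexHull_pair] using hu⟩

lemma ConvexPos.exists_segment_inter_segment_of_convexHull_inter (hS : ConvexPos S)
    {A B : Set (ℝ × ℝ)} (hA : A ⊆ S) (hB : B ⊆ S) (hAB : Disjoint A B)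
    (h : (convexHull ℝ A ∩ convexHull ℝ B).Nonempty) :
    ∃ a ∈ A, ∃ b ∈ A, ∃ c ∈ B, ∃ d ∈ B, c ≠ d ∧ (segment ℝ a b ∩ segment ℝ c d).Nonempty := by
  obtain ⟨c₀, hc₀⟩ := convexHull_nonempty_iff.1 ⟨_, h.some_mem.2⟩
  obtain ⟨a, ha, b, hb, hab⟩ := hS.exists_segment_inter_of_convexHull_inter hA
    (convex_convexHull ℝ B) (by rwa [inter_comm]) (subset_convexHull ℝ B hc₀) (hB hc₀)
    (disjoint_right.1 hAB hc₀)
  obtain ⟨c, hc, d, hd, hcd⟩ := hS.exists_segment_inter_of_convexHull_inter hB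
    (convex_segment a b) (by rwa [inter_comm]) (left_mem_segment ℝ a b) (hA ha)
    (disjoint_left.1 hAB ha)
  refine ⟨a, ha, b, hb, c, hc, d, hd, ?_, hcd⟩
  rintro rfl
  rw [segment_same, inter_singleton_nonempty, ← convexHull_pair] at hcd
  refine hS.notMem_convexHull (hB hc) (pair_subset (hA ha) (hA hb)) ?_ hcd
  rintro (rfl | rfl)
  exacts [disjoint_left.1 hAB ha hc, disjoint_left.1 hAB hb hc]

lemma consecutive_of_disjoint_convexHull {T : Set (ℝ × ℝ)} (hS : S.Finite) (hTS : T ⊆ S)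
    (h : Disjoint (convexHull ℝ T) (convexHull ℝ (S \ T))) : Consecutive S T := by
  obtain ⟨f, u, v, hfu, huv, hfv⟩ := geometric_hahn_banach_compact_closed
    (convex_convexHull ℝ (S \ T)) (hS.sdiff.isCompact_convexHull ℝ) (convex_convexHull ℝ T)
    ((hS.subset hTS).isClosed_convexHull ℝ) h.symm
  exact ⟨hTS, f, u, fun p hp => huv.trans (hfv p (subset_convexHull ℝ T hp)),
    fun p hp => hfu p (subset_convexHull ℝ _ hp)⟩

lemma Consecutive.disjoint_segment {T : Set (ℝ × ℝ)} (h : Consecutive S T) {a b c d : ℝ × ℝ}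
    (ha : a ∈ T) (hb : b ∈ T) (hc : c ∈ S \ T) (hd : d ∈ S \ T) :
    Disjoint (segment ℝ a b) (segment ℝ c d) := by
  obtain ⟨-, f, t, hT, hST⟩ := h
  refine Disjoint.mono ((convex_halfSpace_gt f.isLinear t).segment_subset (hT a ha) (hT b hb))
    ((convex_halfSpace_lt f.isLinear t).segment_subset (hST c hc) (hST d hd)) ?_
  exact disjoint_left.2 fun p (hp : t < f p) hp' => lt_asymm hp hp'

lemma PlanarDrawing.disjoint_convexHull_prefix {E : Fin (m + 1) → ℝ × ℝ}
    (hplanar : PlanarDrawing E) (hinj : Function.Injective E) (hconv : ConvexPos (range E))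
    (hcol : NoThreeCollinear (range E)) (i : ℕ) :
    Disjoint (convexHull ℝ (E '' {j | (j : ℕ) < i}))
      (convexHull ℝ (range E \ E '' {j | (j : ℕ) < i})) := by
  have hne : ∀ j j' : Fin (m + 1), (j : ℕ) ≠ j' → E j ≠ E j' :=
    fun j j' h => hinj.ne (Fin.ne_of_val_ne h)
  rw [disjoint_iff_inter_eq_empty, ← not_nonempty_iff_eq_empty]
  intro hmeet
  obtain ⟨_, ⟨ja, hja, rfl⟩, _, ⟨jb, hjb, rfl⟩, _, ⟨⟨jc, rfl⟩, hjc⟩, _, ⟨⟨jd, rfl⟩, hjd⟩,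
    hcd, hcross⟩ := hconv.exists_segment_inter_segment_of_convexHull_inter
      (image_subset_range _ _) sdiff_subset disjoint_sdiff_right hmeet
  simp only [hinj.mem_set_image, mem_ofPred_eq, not_lt] at hja hjb hjc hjd
  obtain ⟨k, -, hk, hkcross⟩ := exists_edge_inter_segment hconv hcol (fun j => mem_range_self j)
    (mem_range_self jc) (mem_range_self jd) hcd
    (fun j _ _ => ⟨hne _ _ (by omega), hne _ _ (by omega)⟩) hcross
  obtain ⟨l, hl, -, hlcross⟩ := exists_edge_inter_segment hconv hcol (fun j => mem_range_self j)
    (a := jc) (b := jd) (mem_range_self k.castSucc) (mem_range_self k.succ)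
    (hne _ _ (by simp)) (fun j _ _ => ⟨hne _ _ (by simp; omega), hne _ _ (by simp; omega)⟩)
    (by rwa [inter_comm])
  have hkl := hplanar.1 k l (by omega)
  rw [inter_comm] at hlcross
  exact hlcross.ne_empty hkl

end

/-- on a convex point set (no three collinear), an embedding of a path is
planar iff every proper prefix of size `i`, `1 < i < n`, occupies a consecutive subset. -/
theorem planar_iff_prefixes_consecutive {m : ℕ} (E : Fin (m + 1) → ℝ × ℝ)
    (S : Set (ℝ × ℝ)) (hconv : ConvexPos S) (hcol : NoThreeCollinear S)
    (hE : EmbOn E S) :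
    PlanarDrawing E ↔
      ∀ i : ℕ, 1 < i → i < m + 1 →
        Consecutive S (E '' {j : Fin (m + 1) | (j : ℕ) < i}) := by
  obtain ⟨hinj, rfl⟩ := hE
  have hne : ∀ j j' : Fin (m + 1), (j : ℕ) ≠ j' → E j ≠ E j' :=
    fun j j' h => hinj.ne (Fin.ne_of_val_ne h)
  have hprefix : ∀ i (j : Fin (m + 1)), E j ∈ E '' {j' | (j' : ℕ) < i} ↔ (j : ℕ) < i :=
    fun _ _ => hinj.mem_set_image
  refine ⟨fun hplanar i _ _ => consecutive_of_disjoint_convexHull (finite_range E)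
    (image_subset_range E _) (hplanar.disjoint_convexHull_prefix hinj hconv hcol i),
    fun hcons => ⟨fun k l hkl => ?_, fun k l hkl => ?_⟩⟩
  · rw [← disjoint_iff_inter_eq_empty]
    exact (hcons l (by omega) (by omega)).disjoint_segment ((hprefix _ _).2 (by simp; omega))
      ((hprefix _ _).2 (by simp; omega)) ⟨mem_range_self _, by rw [hprefix]; simp⟩
      ⟨mem_range_self _, by rw [hprefix]; simp⟩
  · rw [show l.castSucc = k.succ from Fin.ext (by simp; omega)]
    exact segment_inter_segment_eq_singleton (hcol.cross_ne_zero (mem_range_self _)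
      (mem_range_self _) (mem_range_self _) (hne _ _ (by simp; omega))
      (hne _ _ (by simp)) (hne _ _ (by simp; omega)))
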